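/- arXiv:1607.07658 — 2 statements merged into one kernel-verified Lean document; each statement's English description precedes it below -/
import Mathlib

section
/- For every w = (x_1,...,x_k) ∈ X^{(k)} and every l ∈ {1,...,k}, there exist real numbers A > 0 and B such that for every x ∈ X_l, T(w') = A · F_{l,σ^l(w)}(x) + B, where w' denotes the word obtained from w by replacing its l-th letter by x. -/
open Finset

namespace Secretary

/-- Binomial coefficient on integers: zero when `b < 0` or `b > a`. -/
noncomputable def Cb (a b : ℤ) : ℝ :=
  if 0 ≤ b ∧ b ≤ a then (Nat.choose a.toNat b.toNat : ℝ) else 0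

/-- The value `π(i)` of a permutation of `{1,...,n}` in 1-based indexing. -/
def pv (n : ℕ) (π : Equiv.Perm (Fin n)) (i : ℕ) : ℕ :=
  if h : i - 1 < n then ((π ⟨i - 1, h⟩ : Fin n) : ℕ) + 1 else 0

/-- The relative rank `ρ_π(i)`: the number of `j ∈ {1,...,i}` with `π(j) ≤ π(i)`. -/
def rho (n : ℕ) (π : Equiv.Perm (Fin n)) (i : ℕ) : ℕ :=
  ((Finset.Icc 1 i).filter fun j => pv n π j ≤ pv n π i).card

/-- Extension of a sequence `s` with `s (k+1) = n - 1`. -/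
def sExt (n k : ℕ) (s : ℕ → ℕ) (l : ℕ) : ℕ := if l = k + 1 then n - 1 else s l

/-- `i` is a `(π, l, w)`-element. -/
def IsElem (n k : ℕ) (s : ℕ → ℕ) (π : Equiv.Perm (Fin n)) (l i : ℕ) : Prop :=
  sExt n k s l < i ∧ i ≤ sExt n k s (l + 1) ∧ rho n π i ≤ l

/-- `l` is a `w`-threshold of `π`. -/
def IsThreshold (n k : ℕ) (s : ℕ → ℕ) (π : Equiv.Perm (Fin n)) (l : ℕ) : Prop :=
  1 ≤ l ∧ l ≤ k ∧ ∃ i, IsElem n k s π l i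

open Classical in
/-- `π` is a lucky permutation for the sequence `w = s`. -/
def Lucky (n k : ℕ) (s : ℕ → ℕ) (π : Equiv.Perm (Fin n)) : Prop :=
  if ∃ l, IsThreshold n k s π l then
    pv n π (sInf {i | IsElem n k s π (sInf {l | IsThreshold n k s π l}) i}) ≤ k
  else pv n π n ≤ k

/-- The maps `r_l` (first argument an integer `l ≤ k`). -/
noncomputable def rr (n k : ℕ) (l : ℤ) (x : ℕ) : ℝ :=
  if l < 0 then 0
  else if l = 0 then
    1 / (x : ℝ) - (k : ℝ) / n - Cb ((n : ℤ) - x - 1) k / ((x : ℝ) * Cb n k)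
      - (1 / Cb n k) * ∑ j ∈ Finset.Icc 1 x, Cb ((n : ℤ) - j - 1) ((k : ℤ) - 1) / (j : ℝ)
  else
    ((Nat.factorial (x - l.toNat - 1) : ℝ) / (Nat.factorial x : ℝ)) *
      (1 - (1 / ((l : ℝ) * Cb n x)) *
        ∑ j ∈ Finset.range (l.toNat + 1),
          ((l : ℝ) - j) * Cb k j * Cb ((n : ℤ) - k) ((x : ℤ) - j))

/-- The constant `δ_{k,n}`. -/
noncomputable def delta (n k : ℕ) : ℝ :=
  if k = 1 then -(1 / (n : ℝ)) * ∑ j ∈ Finset.Icc 1 (n - 1), (1 : ℝ) / j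
  else (Nat.factorial (n - k) : ℝ) / (Nat.factorial n : ℝ)

/-- The maps `d_l` for `0 ≤ l ≤ k`. -/
noncomputable def d (n k : ℕ) (l x : ℕ) : ℝ :=
  if l = 0 then
    -1 + (k : ℝ) * x / n + Cb ((n : ℤ) - x - 1) k / Cb n k
      + ((x : ℝ) / Cb n k) * ∑ j ∈ Finset.Icc 1 x, Cb ((n : ℤ) - j - 1) ((k : ℤ) - 1) / (j : ℝ)
  else if l = 1 then
    -((k : ℝ) / n) - (1 / Cb n k) * ∑ j ∈ Finset.Icc 1 x, Cb ((n : ℤ) - j - 1) ((k : ℤ) - 1) / (j : ℝ)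
  else
    ((k : ℝ) * (Nat.factorial x : ℝ) * (Nat.factorial (n - l - x) : ℝ) /
        ((l : ℝ) * ((l : ℝ) - 1) * (Nat.factorial n : ℝ))) *
      ∑ j ∈ Finset.range (l - 1), Cb ((k : ℤ) - 1) j * Cb ((n : ℤ) - k) ((x : ℤ) + l - j - 1)

/-- The maps `c_l(x) = d_l(x - l)`. -/
noncomputable def c (n k l x : ℕ) : ℝ := d n k l (x - l)

/-- The constant `ξ_{k,n}`. -/
noncomputable def xi (n k : ℕ) : ℝ :=
  (k : ℝ) * (Nat.factorial (n - k - 1) : ℝ) / (Nat.factorial n : ℝ)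

/-- `w` (given as a 1-indexed function) is a word in `X^{(k-l)}`, i.e. its `j`-th letter
belongs to `X_{l+j} = {l+j, ..., n-1}` for `1 ≤ j ≤ k - l`. -/
def memX (n k l : ℕ) (w : ℕ → ℕ) : Prop :=
  ∀ j ∈ Finset.Icc 1 (k - l), l + j ≤ w j ∧ w j ≤ n - 1

/-- The left-shift operator removing the first `l` letters of a word. -/
def shift (l : ℕ) (w : ℕ → ℕ) : ℕ → ℕ := fun j => w (l + j)

/-- The maps `R_{l,j}`. -/
noncomputable def Rmap (n k l : ℕ) (w : ℕ → ℕ) (j : ℕ) : ℝ :=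
  if 1 ≤ j ∧ j ≤ k - l then
    rr n k ((l : ℤ) + j - 1) (w j)
      - rr n k ((l : ℤ) + j - 1) (if j = k - l then n - 1 else w (j + 1))
  else 0

/-- The maps `Γ_{l,j,j'}`. -/
noncomputable def Gam (n k l j j' : ℕ) (w : ℕ → ℕ) : ℝ :=
  if 1 ≤ j ∧ j ≤ j' ∧ j' ≤ k - l then
    ∏ t ∈ Finset.Icc j j', ((w t : ℝ) - l - t + 1)
  else 1

/-- The maps `T_l`. -/
noncomputable def Tmap (n k l : ℕ) (w : ℕ → ℕ) : ℝ :=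
  (∑ j ∈ Finset.Icc 1 (k - l), Rmap n k l w j * Gam n k l 1 j w)
    + xi n k * Gam n k l 1 (k - l) w

/-- The maps `D_l(w) = r_{l-1}(x_1) - T_l(w)`, with `x_1 := n-1` when `l = k`. -/
noncomputable def Dmap (n k l : ℕ) (w : ℕ → ℕ) : ℝ :=
  rr n k ((l : ℤ) - 1) (if l = k then n - 1 else w 1) - Tmap n k l w

/-- The maps `F_{l,w}(x) = -c_{l-1}(x) - x·D_l(w)`. -/
noncomputable def Fmap (n k l : ℕ) (w : ℕ → ℕ) (x : ℕ) : ℝ :=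
  -(c n k (l - 1) x) - (x : ℝ) * Dmap n k l w

/-- The maps `a_l`. -/
noncomputable def amap (n k l x : ℕ) : ℝ :=
  (1 / Cb n x) * ∑ j ∈ Finset.range (l + 1), Cb k j * Cb ((n : ℤ) - k) ((x : ℤ) - j)

/-- The maps `b_l`. -/
noncomputable def bmap (n k l x : ℕ) : ℝ :=
  (1 / ((l : ℝ) * Cb n x)) *
    ∑ j ∈ Finset.range (l + 1), (j : ℝ) * Cb k j * Cb ((n : ℤ) - k) ((x : ℤ) - j)

/-- `π ∈ S(l0, i0)`: `π` is lucky for `s`, `l0` is the smallest `s`-threshold of `π`,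
and `i0` is the smallest `(π, l0, s)`-element. -/
def SMem (n k : ℕ) (s : ℕ → ℕ) (l0 i0 : ℕ) (π : Equiv.Perm (Fin n)) : Prop :=
  Lucky n k s π ∧ IsLeast {l | IsThreshold n k s π l} l0 ∧
    IsLeast {i | IsElem n k s π l0 i} i0

/-- `π ∈ S(Y, Y', l0, i0)`. -/
def SYYMem (n k : ℕ) (s : ℕ → ℕ) (Y Y' : Finset ℕ) (l0 i0 : ℕ) (π : Equiv.Perm (Fin n)) :
    Prop :=
  SMem n k s l0 i0 π ∧ ((Finset.Icc 1 i0).image (pv n π)) ∩ Finset.Icc 1 k = Y ∧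
    ((Finset.Icc 1 i0).image (pv n π)) ∩ Finset.Icc (k + 1) n = Y'

/-!
Since `r_{-1} = 0` we have `T = -D_0`. Peeling off the first letter of a word `v` gives
`T_m(v) = (v_1 - m) (r_m(v_1) - D_{m+1}(σ v))`, and the identity
`(x - m) r_m(x) - r_{m-1}(x) = -c_m(x)` turns this into the affine recursion
`D_m(v) = (v_1 - m) D_{m+1}(σ v) + c_m(v_1)`, whose slopes `v_1 - m` are positive on `X^{(k-m)}`.
Iterating it from `m = 0` to `m = l - 2` over letters that do not change makes `T(w')` a positive
multiple of `D_{l-1}(σ^{l-1} w')` plus a constant, and one more step gives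
`D_{l-1}(σ^{l-1} w') = -F_{l,σ^l w}(x) - (l - 1) D_l(σ^l w)`.
-/

lemma prod_Icc_one_eq_prod_range {M : Type*} [CommMonoid M] (f : ℕ → M) (j : ℕ) :
    ∏ t ∈ Icc 1 j, f t = ∏ t ∈ range j, f (t + 1) := by
  rw [range_eq_Ico, prod_Ico_add' f 0 j 1]
  rfl

lemma sum_Icc_one_eq_sum_range {M : Type*} [AddCommMonoid M] (f : ℕ → M) (j : ℕ) :
    ∑ t ∈ Icc 1 j, f t = ∑ t ∈ range j, f (t + 1) := by
  rw [range_eq_Ico, sum_Ico_add' f 0 j 1]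
  rfl

lemma shift_zero (v : ℕ → ℕ) : shift 0 v = v := by
  funext j
  simp only [shift, zero_add]

lemma shift_shift (a b : ℕ) (v : ℕ → ℕ) : shift a (shift b v) = shift (b + a) v := by
  funext j
  simp only [shift, add_assoc]

lemma Cb_natCast (a b : ℕ) : Cb a b = a.choose b := by
  unfold Cb
  split_ifs with h
  · simp
  · rw [Nat.choose_eq_zero_of_lt (by omega), Nat.cast_zero]

lemma Cb_eq_choose {a b : ℤ} {p q : ℕ} (ha : a = p) (hb : b = q) : Cb a b = p.choose q := by
  rw [ha, hb, Cb_natCast]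

lemma choose_mul_choose_sub_comm (n a b : ℕ) :
    n.choose a * (n - a).choose b = n.choose b * (n - b).choose a := by
  by_cases h : a + b ≤ n
  · have ha := Nat.choose_mul (n := n) (k := a + b) (s := a) (by omega)
    have hb := Nat.choose_mul (n := n) (k := a + b) (s := b) (by omega)
    rw [Nat.add_sub_cancel_left] at ha
    rw [Nat.add_sub_cancel] at hb
    rw [← ha, ← hb, Nat.choose_symm_add]
  · have vanish : ∀ a b, n < a + b → n.choose a * (n - a).choose b = 0 := fun a b hab => by
      rcases le_or_gt a n with ha | ha
      · rw [Nat.choose_eq_zero_of_lt (n := n - a) (by omega), mul_zero]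
      · rw [Nat.choose_eq_zero_of_lt ha, zero_mul]
    rw [vanish a b (by omega), vanish b a (by omega)]

lemma sum_range_mul_choose_mul (k m : ℕ) (g : ℕ → ℝ) :
    ∑ j ∈ range (m + 1), (j : ℝ) * k.choose j * g j =
      k * ∑ i ∈ range m, ((k - 1).choose i : ℝ) * g (i + 1) := by
  rw [sum_range_succ', mul_sum]
  simp only [Nat.cast_zero, zero_mul, add_zero]
  refine sum_congr rfl fun i _ => ?_
  rcases k with _ | k
  · simp
  · have h := Nat.add_one_mul_choose_eq k i
    rw [Nat.add_sub_cancel]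
    have hR : ((k + 1 : ℕ) : ℝ) * k.choose i = (k + 1).choose (i + 1) * ((i + 1 : ℕ) : ℝ) := by
      exact_mod_cast h
    push_cast at hR ⊢
    linear_combination (g (i + 1)) * hR.symm

lemma mul_sum_sub_mul_sum (a : ℕ → ℝ) (m : ℕ) :
    (m : ℝ) * ∑ j ∈ range m, ((m : ℝ) - 1 - j) * a j
        - ((m : ℝ) - 1) * ∑ j ∈ range (m + 1), ((m : ℝ) - j) * a j =
      -∑ j ∈ range m, (j : ℝ) * a j := by
  rw [sum_range_succ, sub_self, zero_mul, add_zero, mul_sum, mul_sum, ← sum_sub_distrib,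
    ← sum_neg_distrib]
  exact sum_congr rfl fun j _ => by ring

variable {n k : ℕ}

lemma rr_neg {l : ℤ} (hl : l < 0) (x : ℕ) : rr n k l x = 0 := if_pos hl

lemma rr_natCast {m : ℕ} (hm : 1 ≤ m) (x : ℕ) :
    rr n k m x = ((x - m - 1).factorial / x.factorial : ℝ) *
      (1 - 1 / (m * Cb n x) *
        ∑ j ∈ range (m + 1), ((m : ℝ) - j) * Cb k j * Cb (n - k : ℤ) (x - j)) := by
  rw [rr, if_neg (by omega), if_neg (by omega)]
  simp

lemma mul_rr_zero {x : ℕ} (hx : x ≠ 0) : (x : ℝ) * rr n k 0 x = -c n k 0 x := by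
  have hx0 : (x : ℝ) ≠ 0 := by exact_mod_cast hx
  simp only [rr, c, d]
  norm_num
  field_simp
  ring

lemma sub_mul_rr_one (hkn : k < n) (hk : 1 ≤ k) {x : ℕ} (hx : 2 ≤ x) (hxn : x < n) :
    ((x : ℝ) - 1) * rr n k 1 x - rr n k 0 x = -c n k 1 x := by
  obtain ⟨y, rfl⟩ : ∃ y, x = y + 2 := ⟨x - 2, by omega⟩
  have hCnk : (n.choose k : ℝ) ≠ 0 := by exact_mod_cast (Nat.choose_pos hkn.le).ne'
  have hCnx : (n.choose (y + 2) : ℝ) ≠ 0 := by exact_mod_cast (Nat.choose_pos hxn.le).ne'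
  have hsum : ∑ j ∈ Icc 1 (y + 2), Cb ((n : ℤ) - j - 1) ((k : ℤ) - 1) / (j : ℝ) =
      ∑ j ∈ Icc 1 (y + 1), Cb ((n : ℤ) - j - 1) ((k : ℤ) - 1) / (j : ℝ)
        + (n - (y + 2) - 1).choose (k - 1) / ((y + 2 : ℕ) : ℝ) := by
    rw [sum_Icc_succ_top (by omega),
      Cb_eq_choose (p := n - (y + 2) - 1) (q := k - 1) (by omega) (by omega)]
  have hpascal : ((n - (y + 2) - 1).choose k + (n - (y + 2) - 1).choose (k - 1) : ℝ) =
      (n - (y + 2)).choose k := by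
    have h := Nat.choose_succ_succ' (n - (y + 2) - 1) (k - 1)
    rw [Nat.sub_add_cancel hk, Nat.sub_add_cancel (by omega)] at h
    rw [h]
    push_cast
    ring
  have hsymm : ((n - k).choose (y + 2) : ℝ) * n.choose k =
      (n - (y + 2)).choose k * n.choose (y + 2) := by
    rw [mul_comm, mul_comm _ (n.choose (y + 2) : ℝ)]
    exact_mod_cast choose_mul_choose_sub_comm n k (y + 2)
  rw [show (1 : ℤ) = (1 : ℕ) from rfl, rr_natCast le_rfl, rr, if_neg (by norm_num),
    if_pos (by norm_num), c, d, if_neg one_ne_zero, if_pos rfl, hsum,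
    show y + 2 - 1 - 1 = y by omega, show y + 2 - 1 = y + 1 by omega]
  simp only [sum_range_succ, sum_range_zero, Nat.factorial_succ, Nat.cast_zero, Nat.cast_one,
    sub_zero, sub_self, zero_mul, add_zero, zero_add, one_mul]
  rw [Cb_natCast, show Cb k 0 = 1 by simp [Cb],
    Cb_eq_choose (p := n - k) (q := y + 2) (by omega) rfl,
    Cb_eq_choose (p := n - (y + 2) - 1) (q := k) (by omega) rfl, Cb_natCast]
  rw [← hpascal] at hsymm
  push_cast
  field_simp
  linear_combination -((y : ℝ) + 1) * (y + 2) * hsymm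

lemma sub_mul_rr_of_two_le (hk : 1 ≤ k) {m x : ℕ} (hm : 2 ≤ m) (hx : m + 1 ≤ x)
    (hxn : x ≤ n) :
    ((x : ℝ) - m) * rr n k m x - rr n k ((m : ℤ) - 1) x = -c n k m x := by
  obtain ⟨p, rfl⟩ : ∃ p, m = p + 1 := ⟨m - 1, by omega⟩
  set S₀ := ∑ j ∈ range (p + 1), ((p : ℝ) - j) * Cb k j * Cb (n - k : ℤ) (x - j) with hS₀
  set S₁ := ∑ j ∈ range (p + 2), ((p : ℝ) + 1 - j) * Cb k j * Cb (n - k : ℤ) (x - j) with hS₁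
  set T := ∑ i ∈ range p, ((k - 1).choose i : ℝ) * Cb (n - k : ℤ) (x - (i + 1 : ℕ)) with hT
  have hS : ((p : ℝ) + 1) * S₀ - p * S₁ = -k * T := by
    have h := mul_sum_sub_mul_sum (fun j => Cb k j * Cb (n - k : ℤ) (x - j)) (p + 1)
    push_cast at h
    simp only [add_sub_cancel_right, ← mul_assoc] at h
    rw [h, hT, neg_mul, ← sum_range_mul_choose_mul k p (fun i => Cb (n - k : ℤ) (x - i))]
    simp only [Cb_natCast, mul_assoc]
  have hc : c n k (p + 1) x = k * (x - (p + 1)).factorial * (n - x).factorial /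
      ((p + 1) * p * n.factorial) * T := by
    rw [c, d, if_neg (by omega), if_neg (by omega),
      show n - (p + 1) - (x - (p + 1)) = n - x by omega, Nat.add_sub_cancel, hT]
    push_cast
    simp only [add_sub_cancel_right]
    congr 1
    refine sum_congr rfl fun i _ => ?_
    rw [Cb_eq_choose (p := k - 1) (q := i) (by omega) rfl]
    congr 2
    push_cast [show p + 1 ≤ x by omega]
    ring
  have hfac : ((x - (p + 1)).factorial : ℝ) =
      (x - (p + 1) : ℝ) * (x - (p + 1) - 1).factorial := by
    rw [← Nat.mul_factorial_pred (by omega : x - (p + 1) ≠ 0)]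
    push_cast [show p + 1 ≤ x by omega]
    ring
  have hchoose : (n.choose x : ℝ) * x.factorial * (n - x).factorial = n.factorial := by
    exact_mod_cast Nat.choose_mul_factorial_mul_factorial hxn
  have hp : (p : ℝ) ≠ 0 := by norm_cast; omega
  have hCnx : (n.choose x : ℝ) ≠ 0 := by exact_mod_cast (Nat.choose_pos hxn).ne'
  rw [show ((p + 1 : ℕ) : ℤ) - 1 = (p : ℤ) by push_cast; ring, rr_natCast (m := p + 1) (by omega),
    rr_natCast (m := p) (by omega), hc, Cb_natCast, show x - p - 1 = x - (p + 1) by omega, hfac,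
    ← hchoose]
  push_cast
  rw [← hS₀, ← hS₁]
  field_simp
  linear_combination ((x : ℝ) - p - 1) * hS

lemma sub_mul_rr_sub_rr (hkn : k < n) {m x : ℕ} (hm : m < k) (hx : m + 1 ≤ x) (hxn : x < n) :
    ((x : ℝ) - m) * rr n k m x - rr n k ((m : ℤ) - 1) x = -c n k m x := by
  rcases (by omega : m = 0 ∨ m = 1 ∨ 2 ≤ m) with rfl | rfl | hm2
  · simpa [rr_neg] using mul_rr_zero (n := n) (k := k) (x := x) (by omega)
  · simpa using sub_mul_rr_one hkn (by omega) hx hxn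
  · exact sub_mul_rr_of_two_le (by omega) hm2 hx hxn.le

lemma Gam_one_succ {m j : ℕ} (hj : j + 1 ≤ k - m) (v : ℕ → ℕ) :
    Gam n k m 1 (j + 1) v = ((v 1 : ℝ) - m) * Gam n k (m + 1) 1 j (shift 1 v) := by
  rw [Gam, if_pos ⟨le_rfl, by omega, hj⟩, prod_Icc_one_eq_prod_range, prod_range_succ']
  rcases Nat.eq_zero_or_pos j with rfl | hj0
  · simp [Gam]
  rw [Gam, if_pos ⟨le_rfl, hj0, by omega⟩, prod_Icc_one_eq_prod_range]
  simp only [shift, show ∀ t, 1 + (t + 1) = t + 1 + 1 from fun t => by omega]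
  push_cast
  rw [mul_comm]
  congr 1
  · ring
  · exact prod_congr rfl fun t _ => by ring

lemma Rmap_succ {m j : ℕ} (hj : 1 ≤ j) (v : ℕ → ℕ) :
    Rmap n k m v (j + 1) = Rmap n k (m + 1) (shift 1 v) j := by
  unfold Rmap
  by_cases hjk : j + 1 ≤ k - m
  · rw [if_pos (show 1 ≤ j + 1 ∧ j + 1 ≤ k - m by omega),
      if_pos (show 1 ≤ j ∧ j ≤ k - (m + 1) by omega)]
    simp only [shift, show (j + 1 = k - m) ↔ (j = k - (m + 1)) by omega, add_comm 1]
    push_cast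
    ring_nf
  · rw [if_neg (by omega), if_neg (by omega)]

lemma Rmap_one {m : ℕ} (hm : m < k) (v : ℕ → ℕ) :
    Rmap n k m v 1 = rr n k m (v 1) - rr n k m (if m + 1 = k then n - 1 else v 2) := by
  rw [Rmap, if_pos ⟨le_rfl, by omega⟩]
  simp only [show (1 = k - m) ↔ (m + 1 = k) by omega]
  push_cast
  ring_nf

lemma Tmap_eq {m : ℕ} (hm : m < k) (v : ℕ → ℕ) :
    Tmap n k m v = ((v 1 : ℝ) - m) * (rr n k m (v 1) - Dmap n k (m + 1) (shift 1 v)) := by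
  obtain ⟨K, hK⟩ : ∃ K, k - m = K + 1 := ⟨k - m - 1, by omega⟩
  have hK' : k - (m + 1) = K := by omega
  have hsum : ∑ j ∈ Icc 1 (k - m), Rmap n k m v j * Gam n k m 1 j v =
      ((v 1 : ℝ) - m) * (Rmap n k m v 1 +
        ∑ j ∈ Icc 1 K, Rmap n k (m + 1) (shift 1 v) j * Gam n k (m + 1) 1 j (shift 1 v)) := by
    rw [hK, sum_Icc_one_eq_sum_range, sum_range_succ', sum_Icc_one_eq_sum_range, mul_add,
      mul_sum, add_comm]
    congr 1
    · rw [Gam_one_succ (by omega), Gam]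
      simp only [zero_add, Std.le_refl, nonpos_iff_eq_zero, one_ne_zero, zero_le, and_true,
        and_false, ↓reduceIte, mul_one]
      ring
    · refine sum_congr rfl fun j hj => ?_
      rw [mem_range] at hj
      rw [Rmap_succ (by omega), Gam_one_succ (by omega)]
      ring
  rw [Tmap, hsum, hK, Gam_one_succ (by omega), Dmap, Tmap, hK', Rmap_one hm]
  simp only [shift]
  push_cast
  ring_nf

lemma Dmap_eq (hkn : k < n) {m : ℕ} (hm : m < k) {v : ℕ → ℕ} (hv : m + 1 ≤ v 1)
    (hvn : v 1 < n) :
    Dmap n k m v = ((v 1 : ℝ) - m) * Dmap n k (m + 1) (shift 1 v) + c n k m (v 1) := by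
  rw [Dmap, if_neg hm.ne, Tmap_eq hm]
  linear_combination (-1 : ℝ) * sub_mul_rr_sub_rr hkn hm hv hvn

lemma Tmap_zero_eq_neg_Dmap (v : ℕ → ℕ) : Tmap n k 0 v = -Dmap n k 0 v := by
  rw [Dmap, rr_neg (by norm_num)]
  ring

lemma Tmap_congr {l : ℕ} {v v' : ℕ → ℕ} (h : ∀ j ∈ Icc 1 (k - l), v j = v' j) :
    Tmap n k l v = Tmap n k l v' := by
  have hGam : ∀ j, Gam n k l 1 j v = Gam n k l 1 j v' := fun j => by
    unfold Gam
    split_ifs with hj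
    · exact prod_congr rfl fun t ht => by
        rw [h t (by rw [mem_Icc] at ht ⊢; omega)]
    · rfl
  have hR : ∀ j, Rmap n k l v j = Rmap n k l v' j := fun j => by
    unfold Rmap
    split_ifs with hj hjk
    · rw [h j (mem_Icc.mpr hj)]
    · rw [h j (mem_Icc.mpr hj), h (j + 1) (mem_Icc.mpr ⟨by omega, by omega⟩)]
    · rfl
  simp only [Tmap, hGam, hR]

lemma Dmap_congr {l : ℕ} (hlk : l ≤ k) {v v' : ℕ → ℕ} (h : ∀ j ∈ Icc 1 (k - l), v j = v' j) :
    Dmap n k l v = Dmap n k l v' := by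
  rw [Dmap, Dmap, Tmap_congr h]
  split_ifs with hl
  · rfl
  · rw [h 1 (mem_Icc.mpr ⟨le_rfl, by omega⟩)]

lemma exists_Dmap_shift_eq_affine (hkn : k < n) {ι : Type*} {v : ι → ℕ → ℕ} {u : ℕ → ℕ}
    {p : ℕ} (hpk : p ≤ k) (hu : ∀ j ∈ Icc 1 p, j ≤ u j ∧ u j < n)
    (hv : ∀ i, ∀ j ∈ Icc 1 p, v i j = u j) {m : ℕ} (hmp : m ≤ p) :
    ∃ A > 0, ∃ B, ∀ i, Dmap n k m (shift m (v i)) = A * Dmap n k p (shift p (v i)) + B := by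
  induction hmp using Nat.decreasingInduction with
  | self => exact ⟨1, one_pos, 0, fun i => by ring⟩
  | of_succ m hmp ih =>
    obtain ⟨A, hA, B, hAB⟩ := ih
    have hm : m + 1 ∈ Icc 1 p := mem_Icc.mpr ⟨by omega, hmp⟩
    obtain ⟨hlo, hhi⟩ := hu (m + 1) hm
    have hpos : (0 : ℝ) < u (m + 1) - m := by
      have : ((m + 1 : ℕ) : ℝ) ≤ u (m + 1) := by exact_mod_cast hlo
      push_cast at this
      linarith
    refine ⟨((u (m + 1) : ℝ) - m) * A, mul_pos hpos hA,
      ((u (m + 1) : ℝ) - m) * B + c n k m (u (m + 1)), fun i => ?_⟩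
    have hvi : shift m (v i) 1 = u (m + 1) := hv i (m + 1) hm
    rw [Dmap_eq hkn (by omega) (hvi ▸ hlo) (hvi ▸ hhi), shift_shift, hAB i, hvi]
    ring

theorem T_affine_in_letter_general (n k : ℕ) (hkn : k < n) (w : ℕ → ℕ)
    (hw : memX n k 0 w) (l : ℕ) (hl : l ∈ Finset.Icc 1 k) :
    ∃ A : ℝ, 0 < A ∧ ∃ B : ℝ, ∀ x ∈ Finset.Icc l (n - 1),
      Tmap n k 0 (Function.update w l x) =
        A * Fmap n k l (shift l w) x + B := by
  obtain ⟨hl1, hlk⟩ := mem_Icc.mp hl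
  obtain ⟨A, hA, B, hAB⟩ := exists_Dmap_shift_eq_affine hkn (v := fun x => Function.update w l x)
    (u := w) (p := l - 1) (by omega)
    (fun j hj => by
      have := hw j (by rw [mem_Icc] at hj ⊢; omega)
      omega)
    (fun x j hj => Function.update_of_ne (by rw [mem_Icc] at hj; omega) _ _) (Nat.zero_le _)
  refine ⟨A, hA, A * (l - 1) * Dmap n k l (shift l w) - B, fun x hx => ?_⟩
  obtain ⟨hlx, hxn⟩ := mem_Icc.mp hx
  have hletter : Dmap n k (l - 1) (shift (l - 1) (Function.update w l x)) =
      ((x : ℝ) - (l - 1 : ℕ)) * Dmap n k l (shift l w) + c n k (l - 1) x := by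
    have hx1 : shift (l - 1) (Function.update w l x) 1 = x := by
      simp [shift, Nat.sub_add_cancel hl1]
    rw [Dmap_eq hkn (by omega) (by omega) (by omega), shift_shift, Nat.sub_add_cancel hl1, hx1]
    congr 2
    exact Dmap_congr hlk fun j hj => Function.update_of_ne (by rw [mem_Icc] at hj; omega) _ _
  have hT := hAB x
  simp only [shift_zero] at hT
  rw [Tmap_zero_eq_neg_Dmap, hT, hletter, Fmap]
  push_cast [hl1]
  ring

theorem T_affine_in_letter (n k : ℕ) (hk : 1 ≤ k) (hkn : k < n) (w : ℕ → ℕ)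
    (hw : memX n k 0 w) (l : ℕ) (hl : l ∈ Finset.Icc 1 k) :
    ∃ A : ℝ, 0 < A ∧ ∃ B : ℝ, ∀ x ∈ Finset.Icc l (n - 1),
      Tmap n k 0 (Function.update w l x) =
        A * Fmap n k l (shift l w) x + B :=
  T_affine_in_letter_general n k hkn w hw l hl
end Secretary
end

section
/- For every l ∈ {2,...,k} and every x ∈ {2,...,n}, one has x · a_{l-1}(x-1) - (x-l) · a_{l-1}(x) = l · a_l(x) and x · b_{l-1}(x-1) - (x-l) · b_{l-1}(x) = l · b_l(x). -/
open Finset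

namespace Secretary

lemma Cb_pos {a b : ℕ} (h : b ≤ a) : 0 < Cb a b := by
  rw [Cb_natCast]
  exact_mod_cast Nat.choose_pos h

lemma Cb_eq_zero_of_neg {a b : ℤ} (hb : b < 0) : Cb a b = 0 :=
  if_neg (by omega)

lemma succ_mul_choose_succ (m t : ℕ) :
    ((t : ℝ) + 1) * m.choose (t + 1) = ((m : ℝ) - t) * m.choose t := by
  rcases le_or_gt t m with ht | ht
  · have h : ((m.choose (t + 1) * (t + 1) : ℕ) : ℝ) = (m.choose t * (m - t) : ℕ) := by
      rw [Nat.choose_succ_right_eq]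
    push_cast [Nat.cast_sub ht] at h
    linarith
  · simp [Nat.choose_eq_zero_of_lt ht, Nat.choose_eq_zero_of_lt (Nat.lt_succ_of_lt ht)]

lemma mul_Cb (m y : ℤ) : (y : ℝ) * Cb m y = ((m : ℝ) - y + 1) * Cb m (y - 1) := by
  rcases lt_or_ge m 0 with hm | hm
  · simp only [Cb, if_neg (show ¬(0 ≤ y ∧ y ≤ m) by omega),
      if_neg (show ¬(0 ≤ y - 1 ∧ y - 1 ≤ m) by omega), mul_zero]
  lift m to ℕ using hm
  rcases lt_or_ge y 1 with hy | hy
  · rw [Cb_eq_zero_of_neg (by omega : y - 1 < 0)]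
    rcases (show y = 0 ∨ y < 0 by omega) with rfl | hy0
    · simp
    · simp [Cb_eq_zero_of_neg hy0]
  obtain ⟨t, rfl⟩ : ∃ t : ℕ, y = t + 1 := ⟨(y - 1).toNat, by omega⟩
  rw [add_sub_cancel_right, show ((t : ℤ) + 1) = ((t + 1 : ℕ) : ℤ) by push_cast; ring,
    Cb_natCast, Cb_natCast]
  push_cast
  linear_combination succ_mul_choose_succ m t

lemma Cb_mul_Cb_contiguous (a b x : ℤ) (j : ℕ) :
    ((a : ℝ) + b - x + 1) * (Cb a j * Cb b (x - 1 - j)) =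
      ((x : ℝ) - j) * (Cb a j * Cb b (x - j)) +
        ((j : ℝ) + 1) * (Cb a (j + 1 : ℕ) * Cb b (x - (j + 1 : ℕ))) := by
  have hb := mul_Cb b (x - j)
  have ha := mul_Cb a (j + 1 : ℕ)
  push_cast at hb ha ⊢
  rw [show x - j - 1 = x - 1 - j by ring] at hb
  rw [show x - (j + 1) = x - 1 - j by ring, add_sub_cancel_right] at *
  linear_combination (-(Cb a j)) * hb + (-(Cb b (x - 1 - j))) * ha

section Telescoping

variable {T U : ℕ → ℝ} {N y : ℝ}

lemma sum_range_telescope_const (h : ∀ j : ℕ, N * U j = (y - j) * T j + (j + 1) * T (j + 1))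
    (l : ℕ) :
    N * ∑ j ∈ range l, U j - (y - l) * ∑ j ∈ range l, T j = l * ∑ j ∈ range (l + 1), T j := by
  induction l with
  | zero => simp
  | succ l ih =>
    simp only [sum_range_succ] at ih ⊢
    push_cast
    linear_combination ih + h l

lemma sum_range_telescope_linear (h : ∀ j : ℕ, N * U j = (y - j) * T j + (j + 1) * T (j + 1))
    (l : ℕ) :
    N * ∑ j ∈ range l, j * U j - (y - l) * ∑ j ∈ range l, j * T j =
      (l - 1) * ∑ j ∈ range (l + 1), j * T j := by
  induction l with
  | zero => simp
  | succ l ih =>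
    simp only [sum_range_succ] at ih ⊢
    push_cast
    linear_combination ih + l * h l

end Telescoping

theorem ab_rec_general (n k : ℕ) :
    ∀ l ∈ Finset.Icc 2 k, ∀ x ∈ Finset.Icc 2 n,
      (x : ℝ) * amap n k (l - 1) (x - 1) - ((x : ℝ) - l) * amap n k (l - 1) x =
          (l : ℝ) * amap n k l x ∧
      (x : ℝ) * bmap n k (l - 1) (x - 1) - ((x : ℝ) - l) * bmap n k (l - 1) x =
          (l : ℝ) * bmap n k l x := by
  intro l hl x hx
  rw [Finset.mem_Icc] at hl hx
  have hx1 : ((x - 1 : ℕ) : ℤ) = x - 1 := by omega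
  have hl1 : ((l - 1 : ℕ) : ℝ) = l - 1 := by rw [Nat.cast_sub (by omega), Nat.cast_one]
  have hC0 : Cb n x ≠ 0 := (Cb_pos hx.2).ne'
  have hC1 : Cb n (x - 1) ≠ 0 := hx1 ▸ (Cb_pos (by omega : x - 1 ≤ n)).ne'
  have hl1_ne : (l : ℝ) - 1 ≠ 0 := by
    rw [← hl1]; exact Nat.cast_ne_zero.mpr (by omega)
  have hl_ne : (l : ℝ) ≠ 0 := Nat.cast_ne_zero.mpr (by omega)
  have hnorm : (x : ℝ) / Cb n (x - 1) = ((n : ℝ) - x + 1) / Cb n x := by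
    rw [div_eq_div_iff hC1 hC0]
    simpa using mul_Cb n x
  have hrec (j : ℕ) : ((n : ℝ) - x + 1) * (Cb k j * Cb ((n : ℤ) - k) (x - 1 - j)) =
      ((x : ℝ) - j) * (Cb k j * Cb ((n : ℤ) - k) (x - j)) +
        ((j : ℝ) + 1) * (Cb k (j + 1 : ℕ) * Cb ((n : ℤ) - k) (x - (j + 1 : ℕ))) := by
    simpa using Cb_mul_Cb_contiguous k ((n : ℤ) - k) x j
  have hA := sum_range_telescope_const hrec l
  have hB := sum_range_telescope_linear hrec l
  simp only [← mul_assoc] at hB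
  unfold amap bmap
  rw [Nat.sub_add_cancel (by omega : 1 ≤ l), hx1, hl1]
  constructor
  · rw [← mul_assoc, mul_one_div, hnorm]
    linear_combination hA / Cb n x
  · rw [← mul_assoc, mul_one_div, div_mul_eq_div_div_swap, hnorm]
    field_simp
    exact hB

theorem ab_rec (n k : ℕ) (hk : 1 ≤ k) (hkn : k < n) :
    ∀ l ∈ Finset.Icc 2 k, ∀ x ∈ Finset.Icc 2 n,
      (x : ℝ) * amap n k (l - 1) (x - 1) - ((x : ℝ) - l) * amap n k (l - 1) x =
          (l : ℝ) * amap n k l x ∧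
      (x : ℝ) * bmap n k (l - 1) (x - 1) - ((x : ℝ) - l) * bmap n k (l - 1) x =
          (l : ℝ) * bmap n k l x :=
  ab_rec_general n k
end Secretary
end
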